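/- Fix α ∈ (0,1) and γ ∈ [−1,1]. Let F(x) = 1 − x^{−α} for x ≥ 1 and F(x) = 0 for x < 1 (the Pareto distribution with tail index α), and let (X_1, X_2) be a random vector whose joint cumulative distribution function is the bivariate EFGM distribution H(x_1, x_2) = F(x_1)·F(x_2)·(1 + γ·(1 − F(x_1))·(1 − F(x_2))). Then there exists q_0 ∈ (0,1) such that for all loss probabilities q ∈ (0, q_0), VaR_q((X_1 + X_2)/2) > VaR_q(X_1): for sufficiently small loss probability, diversifying two EFGM-dependent Pareto risks with tail index α < 1 strictly increases the Value-at-Risk. -/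

import Mathlib

open MeasureTheory ProbabilityTheory Filter

/-- The Pareto distribution function with tail index `α`:
`F(x) = 1 − x^(−α)` for `x ≥ 1`, and `0` for `x < 1`. -/
noncomputable def paretoCDF (α x : ℝ) : ℝ :=
  if 1 ≤ x then 1 - x ^ (-α) else 0

/-- Value-at-Risk of a random variable `X` at loss probability `q`:
`VaR_q(X) = inf {x | P(X > x) ≤ q}`. -/
noncomputable def lossVaR {Ω : Type*} [MeasurableSpace Ω] (μ : Measure Ω)
    (X : Ω → ℝ) (q : ℝ) : ℝ :=
  sInf {x : ℝ | (μ {ω | x < X ω}).toReal ≤ q}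

lemma paretoCDF_of_one_le {α x : ℝ} (hx : 1 ≤ x) : paretoCDF α x = 1 - x ^ (-α) :=
  if_pos hx

lemma paretoCDF_of_lt_one {α x : ℝ} (hx : x < 1) : paretoCDF α x = 0 :=
  if_neg (not_le.mpr hx)

lemma marginal_of_cdf {Ω : Type*} [MeasurableSpace Ω] (μ : Measure Ω) [IsProbabilityMeasure μ]
    {α γ : ℝ} (hα : 0 < α) (X Y : Ω → ℝ)
    (h : ∀ x y : ℝ, (μ {ω | X ω ≤ x ∧ Y ω ≤ y}).toReal
        = paretoCDF α x * paretoCDF α y * (1 + γ * (1 - paretoCDF α x) * (1 - paretoCDF α y)))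
    (x : ℝ) : (μ {ω | X ω ≤ x}).toReal = paretoCDF α x := by
  have hmono : Monotone (fun n : ℕ => {ω | X ω ≤ x ∧ Y ω ≤ (n : ℝ)}) := by
    intro n m hnm ω hω
    exact ⟨hω.1, hω.2.trans (by exact_mod_cast hnm)⟩
  have hU : (⋃ n : ℕ, {ω | X ω ≤ x ∧ Y ω ≤ (n : ℝ)}) = {ω | X ω ≤ x} := by
    ext ω
    simp only [Set.mem_iUnion, Set.mem_setOf_eq]
    exact ⟨fun ⟨n, h1, _⟩ => h1, fun h1 => ⟨⌈Y ω⌉₊, h1, Nat.le_ceil _⟩⟩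
  have h1 : Tendsto (fun n : ℕ => μ {ω | X ω ≤ x ∧ Y ω ≤ (n : ℝ)}) atTop
      (nhds (μ {ω | X ω ≤ x})) := by
    rw [← hU]
    exact tendsto_measure_iUnion_atTop hmono
  have h2 : Tendsto (fun n : ℕ => (μ {ω | X ω ≤ x ∧ Y ω ≤ (n : ℝ)}).toReal) atTop
      (nhds (μ {ω | X ω ≤ x}).toReal) :=
    (ENNReal.tendsto_toReal_iff (fun _ => measure_ne_top μ _) (measure_ne_top μ _)).mpr h1
  have hFn : Tendsto (fun n : ℕ => paretoCDF α (n : ℝ)) atTop (nhds 1) := by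
    have h0 : Tendsto (fun n : ℕ => ((n : ℝ)) ^ (-α)) atTop (nhds 0) :=
      (tendsto_rpow_neg_atTop hα).comp tendsto_natCast_atTop_atTop
    have h3 : Tendsto (fun n : ℕ => 1 - ((n : ℝ)) ^ (-α)) atTop (nhds (1 - 0)) :=
      tendsto_const_nhds.sub h0
    rw [sub_zero] at h3
    refine h3.congr' ?_
    filter_upwards [eventually_ge_atTop 1] with n hn
    exact (paretoCDF_of_one_le (by exact_mod_cast hn)).symm
  have h4 : Tendsto
      (fun n : ℕ => paretoCDF α x * paretoCDF α (n : ℝ)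
          * (1 + γ * (1 - paretoCDF α x) * (1 - paretoCDF α (n : ℝ)))) atTop
      (nhds (paretoCDF α x * 1 * (1 + γ * (1 - paretoCDF α x) * (1 - 1)))) :=
    ((tendsto_const_nhds.mul hFn).mul
      (tendsto_const_nhds.add ((tendsto_const_nhds.mul tendsto_const_nhds).mul
        (tendsto_const_nhds.sub hFn))))
  have h5 := h2.congr (fun n : ℕ => h x (n : ℝ))
  have := tendsto_nhds_unique h5 h4
  rw [this]; ring

lemma lt_one_null {Ω : Type*} [MeasurableSpace Ω] (μ : Measure Ω) [IsProbabilityMeasure μ]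
    {α : ℝ} (X : Ω → ℝ)
    (hm : ∀ x, (μ {ω | X ω ≤ x}).toReal = paretoCDF α x) :
    μ {ω | X ω < 1} = 0 := by
  have hnull : ∀ n : ℕ, μ {ω | X ω ≤ 1 - 1 / (n + 1 : ℝ)} = 0 := by
    intro n
    have hlt : (1 : ℝ) - 1 / (n + 1 : ℝ) < 1 := by
      have : (0 : ℝ) < 1 / (n + 1 : ℝ) := by positivity
      linarith
    have := hm (1 - 1 / (n + 1 : ℝ))
    rw [paretoCDF_of_lt_one hlt] at this
    rcases (ENNReal.toReal_eq_zero_iff _).mp this with h | h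
    · exact h
    · exact absurd h (measure_ne_top μ _)
  refine measure_mono_null ?_ (measure_iUnion_null hnull)
  intro ω hω
  obtain ⟨n, hn⟩ := exists_nat_one_div_lt (K := ℝ) (sub_pos.mpr hω)
  exact Set.mem_iUnion.mpr ⟨n, by simp only [Set.mem_setOf_eq]; linarith⟩

lemma toReal_compl {Ω : Type*} [MeasurableSpace Ω] (μ : Measure Ω) [IsProbabilityMeasure μ]
    {s : Set Ω} (hs : MeasurableSet s) : (μ sᶜ).toReal = 1 - (μ s).toReal := by
  have h := measure_add_measure_compl (μ := μ) hs
  rw [measure_univ] at h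
  have := congrArg ENNReal.toReal h
  rw [ENNReal.toReal_add (measure_ne_top μ _) (measure_ne_top μ _), ENNReal.toReal_one] at this
  linarith
lemma alg_lb {γ u : ℝ} (hγu : γ ≤ 1) (hu0 : 0 ≤ u) (hu1 : u ≤ 1) :
    2*u - 2*u^2 ≤ 1 - (1 - u) * (1 - u) * (1 + γ * u * u) := by
  have h1 : 0 ≤ 1 - γ * (1 - u)^2 := by nlinarith [sq_nonneg (1 - u)]
  nlinarith [mul_nonneg (sq_nonneg u) h1]

lemma alg_ub {γ v : ℝ} (hγl : -1 ≤ γ) (hv0 : 0 ≤ v) (hv1 : v ≤ 1) :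
    1 - (1 - v) * (1 - v) * (1 + γ * v * v) ≤ 2 * v := by
  have h1 : 0 ≤ 1 + γ * (1 - v)^2 := by nlinarith [sq_nonneg (1 - v)]
  nlinarith [mul_nonneg (sq_nonneg v) h1]

set_option maxHeartbeats 2000000 in
/-- For `α ∈ (0,1)` and `(X₁, X₂)` with the bivariate EFGM joint distribution with parameter
`γ` and Pareto(α) marginals, there is `q₀ ∈ (0,1)` such that for all loss probabilities
`q ∈ (0, q₀)`, `VaR_q((X₁+X₂)/2) > VaR_q(X₁)`: diversification strictly increases VaR. -/
theorem EFGM_diversification_increases_VaR {Ω : Type*} [MeasurableSpace Ω]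
    (μ : Measure Ω) [IsProbabilityMeasure μ] (α γ : ℝ) (hα : α ∈ Set.Ioo (0 : ℝ) 1)
    (hγ : γ ∈ Set.Icc (-1 : ℝ) 1)
    (X₁ X₂ : Ω → ℝ) (hX₁ : Measurable X₁) (hX₂ : Measurable X₂)
    (hcdf : ∀ x₁ x₂ : ℝ,
      (μ {ω | X₁ ω ≤ x₁ ∧ X₂ ω ≤ x₂}).toReal
        = paretoCDF α x₁ * paretoCDF α x₂
            * (1 + γ * (1 - paretoCDF α x₁) * (1 - paretoCDF α x₂))) :
    ∃ q₀ : ℝ, q₀ ∈ Set.Ioo (0 : ℝ) 1 ∧ ∀ q : ℝ, q ∈ Set.Ioo (0 : ℝ) q₀ →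
      lossVaR μ (fun ω => (X₁ ω + X₂ ω) / 2) q > lossVaR μ X₁ q := by
  obtain ⟨hα0, hα1⟩ := hα
  obtain ⟨hγl, hγu⟩ := hγ
  have marg1 : ∀ x, (μ {ω | X₁ ω ≤ x}).toReal = paretoCDF α x :=
    marginal_of_cdf μ hα0 X₁ X₂ hcdf
  have hswap : ∀ x y : ℝ, (μ {ω | X₂ ω ≤ x ∧ X₁ ω ≤ y}).toReal
      = paretoCDF α x * paretoCDF α y * (1 + γ * (1 - paretoCDF α x) * (1 - paretoCDF α y)) := by
    intro x y
    have hset : {ω | X₂ ω ≤ x ∧ X₁ ω ≤ y} = {ω | X₁ ω ≤ y ∧ X₂ ω ≤ x} := by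
      ext ω; exact and_comm
    rw [hset, hcdf y x]; ring
  have marg2 : ∀ x, (μ {ω | X₂ ω ≤ x}).toReal = paretoCDF α x :=
    marginal_of_cdf μ hα0 X₂ X₁ hswap
  have msble1 : ∀ x : ℝ, MeasurableSet {ω | X₁ ω ≤ x} := fun x => hX₁ measurableSet_Iic
  have msble2 : ∀ x : ℝ, MeasurableSet {ω | X₂ ω ≤ x} := fun x => hX₂ measurableSet_Iic
  have surv1 : ∀ x, (μ {ω | x < X₁ ω}).toReal = 1 - paretoCDF α x := by
    intro x
    have hc : {ω | x < X₁ ω} = {ω | X₁ ω ≤ x}ᶜ := by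
      ext ω; simp [not_le]
    rw [hc, toReal_compl μ (msble1 x), marg1]
  have null1 := lt_one_null μ X₁ marg1
  have null2 := lt_one_null μ X₂ marg2
  have jointc : ∀ a : ℝ, (μ {ω | X₁ ω ≤ a ∧ X₂ ω ≤ a}ᶜ).toReal
      = 1 - paretoCDF α a * paretoCDF α a
          * (1 + γ * (1 - paretoCDF α a) * (1 - paretoCDF α a)) := by
    intro a
    have hm : MeasurableSet {ω | X₁ ω ≤ a ∧ X₂ ω ≤ a} := (msble1 a).inter (msble2 a)
    rw [toReal_compl μ hm, hcdf a a]
  set S : Ω → ℝ := fun ω => (X₁ ω + X₂ ω) / 2 with hSdef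
  -- lower bound on tail of S
  have survS_lb : ∀ t : ℝ, 0 < t →
      (μ {ω | X₁ ω ≤ 2*t ∧ X₂ ω ≤ 2*t}ᶜ).toReal ≤ (μ {ω | t < S ω}).toReal := by
    intro t ht
    have hsub : {ω | X₁ ω ≤ 2*t ∧ X₂ ω ≤ 2*t}ᶜ
        ⊆ {ω | t < S ω} ∪ ({ω | X₁ ω < 1} ∪ {ω | X₂ ω < 1}) := by
      intro ω hω
      by_cases h1 : X₁ ω < 1
      · exact Or.inr (Or.inl h1)
      by_cases h2 : X₂ ω < 1
      · exact Or.inr (Or.inr h2)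
      push_neg at h1 h2
      left
      have hω' : ¬ (X₁ ω ≤ 2*t ∧ X₂ ω ≤ 2*t) := hω
      show t < (X₁ ω + X₂ ω) / 2
      rcases not_and_or.mp hω' with h | h
      · have := not_le.mp h; linarith
      · have := not_le.mp h; linarith
    have hle : μ ({ω | X₁ ω ≤ 2*t ∧ X₂ ω ≤ 2*t}ᶜ) ≤ μ {ω | t < S ω} := by
      calc μ ({ω | X₁ ω ≤ 2*t ∧ X₂ ω ≤ 2*t}ᶜ)
          ≤ μ ({ω | t < S ω} ∪ ({ω | X₁ ω < 1} ∪ {ω | X₂ ω < 1})) := measure_mono hsub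
        _ ≤ μ {ω | t < S ω} + μ ({ω | X₁ ω < 1} ∪ {ω | X₂ ω < 1}) := measure_union_le _ _
        _ = μ {ω | t < S ω} := by
            rw [measure_union_null null1 null2, add_zero]
    exact (ENNReal.toReal_le_toReal (measure_ne_top μ _) (measure_ne_top μ _)).mpr hle
  -- upper bound on tail of S
  have survS_ub : ∀ x : ℝ,
      (μ {ω | x < S ω}).toReal ≤ (μ {ω | X₁ ω ≤ x ∧ X₂ ω ≤ x}ᶜ).toReal := by
    intro x
    refine (ENNReal.toReal_le_toReal (measure_ne_top μ _) (measure_ne_top μ _)).mpr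
      (measure_mono ?_)
    intro ω hω
    have hω' : x < (X₁ ω + X₂ ω) / 2 := hω
    intro hc
    obtain ⟨hc1, hc2⟩ := hc
    linarith
  -- constants
  set b : ℝ := (2 ^ (α⁻¹ : ℝ) + 2) / 2 with hbdef
  have h2lt : (2:ℝ) < 2 ^ (α⁻¹ : ℝ) := by
    calc (2:ℝ) = 2 ^ (1:ℝ) := (Real.rpow_one 2).symm
      _ < 2 ^ (α⁻¹ : ℝ) := Real.rpow_lt_rpow_of_exponent_lt one_lt_two ((one_lt_inv₀ hα0).mpr hα1)
  have hb2 : 2 < b := by rw [hbdef]; linarith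
  have hb0 : (0:ℝ) < b := by linarith
  have hblt : b < 2 ^ (α⁻¹ : ℝ) := by rw [hbdef]; linarith
  have hbpow : b ^ α < 2 := by
    calc b ^ α < (2 ^ (α⁻¹ : ℝ)) ^ α := Real.rpow_lt_rpow hb0.le hblt hα0
      _ = 2 ^ (α⁻¹ * α) := (Real.rpow_mul (by norm_num) _ _).symm
      _ = 2 ^ (1:ℝ) := by rw [inv_mul_cancel₀ hα0.ne']
      _ = 2 := Real.rpow_one 2
  have hbp0 : 0 < b ^ α := Real.rpow_pos_of_pos hb0 _
  set u₀ : ℝ := b ^ (-α) with hu₀def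
  have hu0half : (1:ℝ)/2 < u₀ := by
    rw [hu₀def, Real.rpow_neg hb0.le, ← one_div, div_lt_div_iff₀ (by norm_num) hbp0]
    linarith
  have hu0lt1 : u₀ < 1 :=
    Real.rpow_lt_one_of_one_lt_of_neg (by linarith) (neg_lt_zero.mpr hα0)
  have hu00 : 0 < u₀ := by linarith
  set δ : ℝ := 2 * u₀ - 1 with hδdef
  have hδ0 : 0 < δ := by rw [hδdef]; linarith
  refine ⟨min (δ/2) (1/2), ⟨lt_min (by linarith) (by norm_num), ?_⟩, ?_⟩
  · exact lt_of_le_of_lt (min_le_right _ _) (by norm_num)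
  rintro q ⟨hq0, hqlt⟩
  have hqδ : q < δ/2 := lt_of_lt_of_le hqlt (min_le_left _ _)
  have hqh : q < 1/2 := lt_of_lt_of_le hqlt (min_le_right _ _)
  have hq1 : q < 1 := by linarith
  set r : ℝ := q ^ (-α⁻¹ : ℝ) with hrdef
  have hr0 : 0 < r := Real.rpow_pos_of_pos hq0 _
  have hr1 : 1 < r := by
    rw [hrdef]
    exact (Real.one_lt_rpow_iff_of_pos hq0).mpr
      (Or.inr ⟨hq1, neg_lt_zero.mpr (inv_pos.mpr hα0)⟩)
  have hra : r ^ (-α) = q := by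
    rw [hrdef, ← Real.rpow_mul hq0.le, neg_mul_neg, inv_mul_cancel₀ hα0.ne', Real.rpow_one]
  set t : ℝ := b * r / 2 with htdef
  have ht0 : 0 < t := by rw [htdef]; positivity
  have hart : 2 * t = b * r := by rw [htdef]; ring
  have ha1 : (1:ℝ) ≤ b * r := by nlinarith [mul_lt_mul_of_pos_left hr1 hb0]
  have hu : (b * r) ^ (-α) = u₀ * q := by
    rw [Real.mul_rpow hb0.le hr0.le, hra, hu₀def]
  set u : ℝ := u₀ * q with hudef
  have hu0 : 0 < u := mul_pos hu00 hq0
  have hu1 : u < 1 := by nlinarith [mul_lt_mul_of_pos_right hu0lt1 hq0]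
  -- key tail estimate for S at level t
  have key : q < (μ {ω | t < S ω}).toReal := by
    have h2 := jointc (2*t)
    rw [hart] at h2
    rw [paretoCDF_of_one_le ha1, hu] at h2
    have hcomp : (μ {ω | X₁ ω ≤ 2*t ∧ X₂ ω ≤ 2*t}ᶜ).toReal
        = 1 - (1 - u) * (1 - u) * (1 + γ * u * u) := by
      rw [hart, h2]; ring_nf
    have halg : 2*u - 2*u^2 ≤ 1 - (1 - u) * (1 - u) * (1 + γ * u * u) :=
      alg_lb hγu hu0.le hu1.le
    have hq2u : q < 2*u - 2*u^2 := by
      have hsq : u₀^2 ≤ 1 := pow_le_one₀ hu00.le hu0lt1.le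
      have h1 : u₀^2 * q ≤ q := mul_le_of_le_one_left hq0.le hsq
      have : q * (2*u₀ - 2*u₀^2*q) > q * 1 := by
        apply mul_lt_mul_of_pos_left _ hq0
        linarith
      calc q = q * 1 := (mul_one q).symm
        _ < q * (2*u₀ - 2*u₀^2*q) := this
        _ = 2*u - 2*u^2 := by rw [hudef]; ring
    calc q < 2*u - 2*u^2 := hq2u
      _ ≤ 1 - (1 - u) * (1 - u) * (1 + γ * u * u) := halg
      _ = (μ {ω | X₁ ω ≤ 2*t ∧ X₂ ω ≤ 2*t}ᶜ).toReal := hcomp.symm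
      _ ≤ (μ {ω | t < S ω}).toReal := survS_lb t ht0
  -- nonemptiness witness for the VaR set of S
  set x₀ : ℝ := (q/2) ^ (-α⁻¹ : ℝ) with hx₀def
  have hq20 : 0 < q/2 := by linarith
  have hx₀0 : 0 < x₀ := Real.rpow_pos_of_pos hq20 _
  have hx₀1 : 1 < x₀ := by
    rw [hx₀def]
    exact (Real.one_lt_rpow_iff_of_pos hq20).mpr
      (Or.inr ⟨by linarith, neg_lt_zero.mpr (inv_pos.mpr hα0)⟩)
  have hx₀a : x₀ ^ (-α) = q/2 := by
    rw [hx₀def, ← Real.rpow_mul hq20.le, neg_mul_neg, inv_mul_cancel₀ hα0.ne', Real.rpow_one]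
  have hmem : (μ {ω | x₀ < S ω}).toReal ≤ q := by
    have h2 := jointc x₀
    rw [paretoCDF_of_one_le hx₀1.le, hx₀a] at h2
    set v : ℝ := q/2 with hvdef
    have hv1 : v < 1 := by rw [hvdef]; linarith
    have hv0 : 0 < v := hq20
    calc (μ {ω | x₀ < S ω}).toReal ≤ (μ {ω | X₁ ω ≤ x₀ ∧ X₂ ω ≤ x₀}ᶜ).toReal := survS_ub x₀
      _ = 1 - (1 - v) * (1 - v) * (1 + γ * v * v) := by rw [h2]; ring_nf
      _ ≤ 2 * v := alg_ub hγl hv0.le hv1.le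
      _ = q := by rw [hvdef]; ring
  -- VaR of S is at least t
  have hVaRS : t ≤ lossVaR μ S q := by
    refine le_csInf ⟨x₀, hmem⟩ ?_
    intro x hx
    by_contra hxt
    push_neg at hxt
    have hsub : {ω | t < S ω} ⊆ {ω | x < S ω} := fun ω hω => lt_trans hxt hω
    have : (μ {ω | t < S ω}).toReal ≤ (μ {ω | x < S ω}).toReal :=
      (ENNReal.toReal_le_toReal (measure_ne_top μ _) (measure_ne_top μ _)).mpr
        (measure_mono hsub)
    have hxmem : (μ {ω | x < S ω}).toReal ≤ q := hx
    linarith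
  -- VaR of X₁ is at most r
  have hVaRX : lossVaR μ X₁ q ≤ r := by
    refine csInf_le ⟨1, ?_⟩ ?_
    · intro x hx
      by_contra hx1
      push_neg at hx1
      have hmemx : (μ {ω | x < X₁ ω}).toReal ≤ q := hx
      rw [surv1 x, paretoCDF_of_lt_one hx1] at hmemx
      linarith
    · show (μ {ω | r < X₁ ω}).toReal ≤ q
      rw [surv1 r, paretoCDF_of_one_le hr1.le, hra]
      linarith
  have hrt : r < t := by
    rw [htdef]
    nlinarith [mul_lt_mul_of_pos_right hb2 hr0]
  calc lossVaR μ X₁ q ≤ r := hVaRX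
    _ < t := hrt
    _ ≤ lossVaR μ S q := hVaRS
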